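/- Let f : ℝ^n → ℝ^n be convex, monotone, and additively homogeneous, with eigenvector v. Then there exists a critical class F of f that is invariant by every matrix P ∈ ∂f(v), i.e. P_{ij} = 0 for all P ∈ ∂f(v), i ∈ F, and j ∉ F. -/

import Mathlib

open Matrix Filter

/-- `f` is additively homogeneous: `f (c·1 + x) = c·1 + f x`. -/
def AddHomog {n : ℕ} (f : (Fin n → ℝ) → (Fin n → ℝ)) : Prop :=
  ∀ (c : ℝ) (x : Fin n → ℝ), f (fun i => c + x i) = fun i => c + f x i

/-- A map between coordinate spaces is convex if each coordinate function is convex. -/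
def IsConvexMap {n m : ℕ} (f : (Fin n → ℝ) → (Fin m → ℝ)) : Prop :=
  ∀ i, ConvexOn ℝ Set.univ (fun x => f x i)

/-- Subdifferential of a convex map `f : ℝ^n → ℝ^m` at `v`: matrices `P` with
`f x - f v ≥ P (x - v)` componentwise. -/
def Subdiff {n m : ℕ} (f : (Fin n → ℝ) → (Fin m → ℝ)) (v : Fin n → ℝ) :
    Set (Matrix (Fin m) (Fin n) ℝ) :=
  {P | ∀ x i, P.mulVec (x - v) i ≤ f x i - f v i}

/-- `p` is a stochastic vector. -/
def IsStochVec {n : ℕ} (p : Fin n → ℝ) : Prop := (∀ i, 0 ≤ p i) ∧ ∑ i, p i = 1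

/-- `P` is a row-stochastic matrix. -/
def IsStochMat {n : ℕ} (P : Matrix (Fin n) (Fin n) ℝ) : Prop := ∀ i, IsStochVec (P i)

/-- `i` has access to `j` in the graph of the nonnegative matrix `P`
(arcs `i → j` when `P i j ≠ 0`). -/
def MatAccess {n : ℕ} (P : Matrix (Fin n) (Fin n) ℝ) : Fin n → Fin n → Prop :=
  Relation.ReflTransGen (fun i j => P i j ≠ 0)

/-- `C` is a class of `P`: an equivalence class of mutual access. -/
def IsClass {n : ℕ} (P : Matrix (Fin n) (Fin n) ℝ) (C : Set (Fin n)) : Prop :=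
  ∃ i, C = {j | MatAccess P i j ∧ MatAccess P j i}

/-- `C` is a final class of `P`: a class with no access out of itself. -/
def IsFinalClass {n : ℕ} (P : Matrix (Fin n) (Fin n) ℝ) (C : Set (Fin n)) : Prop :=
  IsClass P C ∧ ∀ i ∈ C, ∀ j, MatAccess P i j → j ∈ C

/-- `N^f(P)`: the union of the final classes of `P`. -/
def finalNodes {n : ℕ} (P : Matrix (Fin n) (Fin n) ℝ) : Set (Fin n) :=
  {i | ∃ C, IsFinalClass P C ∧ i ∈ C}

/-- Final graph `G^f(P)`: union of graphs of `P_{FF}` over final classes `F`. -/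
def finalGraph {n : ℕ} (P : Matrix (Fin n) (Fin n) ℝ) : Fin n → Fin n → Prop :=
  fun i j => ∃ C, IsFinalClass P C ∧ i ∈ C ∧ j ∈ C ∧ P i j ≠ 0

/-- `N^f(PP)` for a set of matrices. -/
def finalNodesSet {n : ℕ} (PP : Set (Matrix (Fin n) (Fin n) ℝ)) : Set (Fin n) :=
  {i | ∃ P ∈ PP, i ∈ finalNodes P}

/-- `𝒞^f(PP)`: final classes of matrices in `PP`. -/
def finalClassesSet {n : ℕ} (PP : Set (Matrix (Fin n) (Fin n) ℝ)) : Set (Set (Fin n)) :=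
  {C | ∃ P ∈ PP, IsFinalClass P C}

/-- `𝒢^f(PP)`: union of final graphs of matrices in `PP`. -/
def finalGraphSet {n : ℕ} (PP : Set (Matrix (Fin n) (Fin n) ℝ)) : Fin n → Fin n → Prop :=
  fun i j => ∃ P ∈ PP, finalGraph P i j

/-- Access in a directed graph given as a relation. -/
def GAccess {n : ℕ} (G : Fin n → Fin n → Prop) : Fin n → Fin n → Prop :=
  Relation.ReflTransGen G

/-- `C` is a (nontrivial) class of the graph `G`: an equivalence class of mutual
access containing at least one arc (i.e. the node set of a strongly connected component
of the graph `G`). -/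
def IsGraphClass {n : ℕ} (G : Fin n → Fin n → Prop) (C : Set (Fin n)) : Prop :=
  (∃ i, C = {j | GAccess G i j ∧ GAccess G j i}) ∧ ∃ i ∈ C, ∃ j ∈ C, G i j

/-- `G^k`: arcs are directed paths of length `k` in `G`. -/
def GraphPow {n : ℕ} (G : Fin n → Fin n → Prop) (k : ℕ) : Fin n → Fin n → Prop :=
  fun i j => ∃ c : ℕ → Fin n, c 0 = i ∧ c k = j ∧ ∀ t < k, G (c t) (c (t + 1))

/-- There is a circuit of length `ℓ ≥ 1` of `G` with all nodes in `C`. -/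
def HasCircuitIn {n : ℕ} (G : Fin n → Fin n → Prop) (C : Set (Fin n)) (ℓ : ℕ) : Prop :=
  0 < ℓ ∧ ∃ c : ℕ → Fin n, c 0 = c ℓ ∧ (∀ t ≤ ℓ, c t ∈ C) ∧ ∀ t < ℓ, G (c t) (c (t + 1))

/-- gcd of a set of natural numbers. -/
noncomputable def SetGcd (S : Set ℕ) : ℕ :=
  sInf {d | (∀ s ∈ S, d ∣ s) ∧ ∀ e, (∀ s ∈ S, e ∣ s) → e ∣ d}

/-- lcm of a set of natural numbers. -/
noncomputable def SetLcm (S : Set ℕ) : ℕ :=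
  sInf {m | (∀ s ∈ S, s ∣ m) ∧ ∀ e, (∀ s ∈ S, s ∣ e) → m ∣ e}

/-- Cyclicity of a graph: lcm over the strongly connected components of the
gcd of the lengths of their circuits. -/
noncomputable def GraphCyclicity {n : ℕ} (G : Fin n → Fin n → Prop) : ℕ :=
  SetLcm {d | ∃ C, IsGraphClass G C ∧ d = SetGcd {ℓ | HasCircuitIn G C ℓ}}

/-- The (additive) eigenspace of `f` for eigenvalue `lam`. -/
def Eigenspace {n : ℕ} (f : (Fin n → ℝ) → (Fin n → ℝ)) (lam : ℝ) : Set (Fin n → ℝ) :=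
  {x | f x = fun i => lam + x i}

/-- Restriction of a vector to the coordinates in `C`. -/
def restrictTo {n : ℕ} (C : Set (Fin n)) (x : Fin n → ℝ) : C → ℝ := fun i => x i


/-!
The subdifferential `∂f(v)` is a convex set of row-stochastic matrices (stochastic because `f` is
monotone and additively homogeneous), and it is nonempty since every convex function on `ℝ^n`
has a subgradient. Averaging two matrices of `∂f(v)` unites their supports, so some `P₀ ∈ ∂f(v)`
has a support containing that of every other matrix of `∂f(v)`. Hence the critical graph is a
subgraph of the graph of `P₀` containing its final graph, and any final class of `P₀` is a critical
class, left by no arc of any `P ∈ ∂f(v)`.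
-/

open Set

theorem ConvexOn.exists_subgradient {E : Type*} [NormedAddCommGroup E] [NormedSpace ℝ E]
    [FiniteDimensional ℝ E] {g : E → ℝ} (hg : ConvexOn ℝ univ g) (v : E) :
    ∃ ℓ : E →L[ℝ] ℝ, ∀ x, ℓ (x - v) ≤ g x - g v := by
  have hcont : Continuous g := continuousOn_univ.mp (hg.continuousOn isOpen_univ)
  set epi : Set (E × ℝ) := {p | g p.1 < p.2}
  have hconvex : Convex ℝ epi := by simpa using hg.convex_strict_epigraph
  have hopen : IsOpen epi := isOpen_lt (hcont.comp continuous_fst) continuous_snd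
  obtain ⟨φ, hφ⟩ := geometric_hahn_banach_open_point hconvex hopen
    (show (v, g v) ∉ epi from lt_irrefl (g v))
  set β := φ (0, 1)
  have hsplit : ∀ x y, φ (x, y) = φ (x, 0) + y * β := fun x y => by
    rw [← smul_eq_mul, ← map_smul, ← map_add]
    simp
  have hβ : β < 0 := by
    have h := hφ (v, g v + 1) (by simp [epi])
    rw [hsplit v (g v + 1), hsplit v (g v)] at h
    linarith
  -- the separating hyperplane is the graph of an affine minorant of `g` touching it at `v`
  refine ⟨(-β)⁻¹ • φ.comp (ContinuousLinearMap.inl ℝ E ℝ), fun x => ?_⟩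
  rw [_root_.smul_apply, ContinuousLinearMap.comp_apply,
    ContinuousLinearMap.inl_apply, smul_eq_mul, inv_mul_le_iff₀ (neg_pos.2 hβ)]
  refine le_of_forall_pos_lt_add fun ε hε => ?_
  have h := hφ (x, g x + ε / -β) (by simp [epi, div_pos hε (neg_pos.2 hβ)])
  rw [hsplit x, hsplit v] at h
  have hsub : φ (x - v, 0) = φ (x, 0) - φ (v, 0) := by rw [← map_sub]; simp
  have hε' : ε / -β * β = -ε := by rw [div_neg, neg_mul, div_mul_cancel₀ ε hβ.ne]
  linarith

section Subdiff

variable {n m : ℕ} {f : (Fin n → ℝ) → (Fin m → ℝ)} {v : Fin n → ℝ}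

variable (v) in
theorem subdiff_nonempty (hconv : IsConvexMap f) : (Subdiff f v).Nonempty := by
  choose ℓ hℓ using fun i => (hconv i).exists_subgradient v
  refine ⟨LinearMap.toMatrix' (LinearMap.pi fun i => (ℓ i : (Fin n → ℝ) →ₗ[ℝ] ℝ)), fun x i => ?_⟩
  rw [LinearMap.toMatrix'_mulVec]
  exact hℓ i x

variable (f v) in
theorem convex_subdiff : Convex ℝ (Subdiff f v) := by
  intro P hP Q hQ a b ha hb hab x i
  rw [Matrix.add_mulVec, Matrix.smul_mulVec, Matrix.smul_mulVec]
  calc a * (P *ᵥ (x - v)) i + b * (Q *ᵥ (x - v)) i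
      ≤ a * (f x i - f v i) + b * (f x i - f v i) :=
        add_le_add (mul_le_mul_of_nonneg_left (hP x i) ha) (mul_le_mul_of_nonneg_left (hQ x i) hb)
    _ = f x i - f v i := by rw [← add_mul, hab, one_mul]

theorem nonneg_of_mem_subdiff (hmon : Monotone f) {P : Matrix (Fin m) (Fin n) ℝ}
    (hP : P ∈ Subdiff f v) (i : Fin m) (j : Fin n) : 0 ≤ P i j := by
  have h := hP (v - Pi.single j 1) i
  rw [sub_sub_cancel_left, Matrix.mulVec_neg, Matrix.mulVec_single_one] at h
  have hle : f (v - Pi.single j 1) i ≤ f v i :=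
    hmon (sub_le_self v (Pi.single_nonneg.2 zero_le_one)) i
  simp only [Pi.neg_apply, Matrix.col_apply] at h
  linarith

theorem isStochMat_of_mem_subdiff {f : (Fin n → ℝ) → (Fin n → ℝ)} (hmon : Monotone f)
    (hhom : AddHomog f) {P : Matrix (Fin n) (Fin n) ℝ} (hP : P ∈ Subdiff f v) :
    IsStochMat P := by
  refine fun i => ⟨nonneg_of_mem_subdiff hmon hP i, ?_⟩
  have hshift : ∀ c : ℝ, (∑ j, P i j) * c ≤ c := fun c => by
    have h := hP (fun k => c + v k) i
    rw [hhom c v, show (fun k => c + v k) - v = fun _ => c by ext; simp] at h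
    simpa [Matrix.mulVec, dotProduct, Finset.sum_mul] using h
  linarith [hshift 1, hshift (-1)]

end Subdiff

theorem IsStochMat.exists_ne_zero {n : ℕ} {P : Matrix (Fin n) (Fin n) ℝ} (hP : IsStochMat P)
    (i : Fin n) : ∃ j, P i j ≠ 0 := by
  by_contra! h
  simpa [h] using (hP i).2

theorem Convex.exists_support_maximal {ι κ : Type*} [Finite ι] [Finite κ]
    {S : Set (Matrix ι κ ℝ)} (hS : Convex ℝ S) (hne : S.Nonempty)
    (hnonneg : ∀ P ∈ S, ∀ i j, 0 ≤ P i j) :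
    ∃ P ∈ S, ∀ Q ∈ S, ∀ i j, Q i j ≠ 0 → P i j ≠ 0 := by
  let supp : Matrix ι κ ℝ → Set (ι × κ) := fun P => {q | P q.1 q.2 ≠ 0}
  obtain ⟨P, hPS, hPmax⟩ := Finite.exists_maximalFor' supp S (toFinite _) hne
  refine ⟨P, hPS, fun Q hQS i j hQ => ?_⟩
  let M := (1 / 2 : ℝ) • P + (1 / 2 : ℝ) • Q
  have hMS : M ∈ S := hS hPS hQS (by norm_num) (by norm_num) (by norm_num)
  have hM : ∀ a b, M a b ≠ 0 ↔ P a b ≠ 0 ∨ Q a b ≠ 0 := fun a b => by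
    have hP := hnonneg P hPS a b
    have hQ := hnonneg Q hQS a b
    simp only [M, Matrix.add_apply, Matrix.smul_apply, smul_eq_mul]
    constructor
    · contrapose!
      rintro ⟨hP0, hQ0⟩
      simp [hP0, hQ0]
    · rintro (h | h) <;> positivity
  have hPM : supp P ⊆ supp M := fun q hq => (hM q.1 q.2).2 (Or.inl hq)
  exact hPmax hMS hPM (show (i, j) ∈ supp M from (hM i j).2 (Or.inr hQ))

section FinalClass

variable {n : ℕ} {P : Matrix (Fin n) (Fin n) ℝ} {C : Set (Fin n)}

theorem exists_isFinalClass (hn : 1 ≤ n) (P : Matrix (Fin n) (Fin n) ℝ) :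
    ∃ C, IsFinalClass P C := by
  -- a node whose set of accessible nodes is minimal belongs to a final class
  obtain ⟨i₀, -, hmin⟩ := finite_univ.exists_minimalFor (fun i => {j | MatAccess P i j})
    univ ⟨⟨0, hn⟩, trivial⟩
  refine ⟨{j | MatAccess P i₀ j ∧ MatAccess P j i₀}, ⟨i₀, rfl⟩, ?_⟩
  rintro i ⟨hi₀i, -⟩ j hij
  have hi₀j : MatAccess P i₀ j := hi₀i.trans hij
  exact ⟨hi₀j, hmin trivial (fun k hjk => hi₀j.trans hjk) Relation.ReflTransGen.refl⟩

theorem IsFinalClass.apply_eq_zero (hC : IsFinalClass P C) {i j : Fin n} (hi : i ∈ C)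
    (hj : j ∉ C) : P i j = 0 := by
  by_contra hij
  exact hj (hC.2 i hi j (Relation.ReflTransGen.single hij))

theorem IsFinalClass.isGraphClass {G : Fin n → Fin n → Prop} (hC : IsFinalClass P C)
    (hGP : ∀ i j, G i j → P i j ≠ 0) (hfinal : ∀ i j, finalGraph P i j → G i j)
    (hrow : ∀ i, ∃ j, P i j ≠ 0) : IsGraphClass G C := by
  have hGaccess : ∀ i ∈ C, ∀ j, MatAccess P i j → GAccess G i j := by
    intro i hi j hij
    induction hij with
    | refl => exact Relation.ReflTransGen.refl
    | @tail b c hib hbc ih =>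
      exact ih.tail (hfinal b c ⟨C, hC, hC.2 i hi b hib, hC.2 i hi c (hib.tail hbc), hbc⟩)
  have hPaccess : ∀ i j, GAccess G i j → MatAccess P i j :=
    Relation.ReflTransGen.mono hGP
  obtain ⟨i₀, hCeq⟩ := hC.1
  have hi₀ : i₀ ∈ C := hCeq ▸ ⟨Relation.ReflTransGen.refl, Relation.ReflTransGen.refl⟩
  obtain ⟨j₀, hj₀⟩ := hrow i₀
  have hj₀C : j₀ ∈ C := hC.2 i₀ hi₀ j₀ (Relation.ReflTransGen.single hj₀)
  refine ⟨⟨i₀, ?_⟩, i₀, hi₀, j₀, hj₀C, hfinal i₀ j₀ ⟨C, hC, hi₀, hj₀C, hj₀⟩⟩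
  ext j
  constructor
  · intro hj
    have hj' := hCeq ▸ hj
    exact ⟨hGaccess i₀ hi₀ j hj'.1, hGaccess j hj i₀ hj'.2⟩
  · rintro ⟨hi₀j, hji₀⟩
    exact hCeq ▸ ⟨hPaccess _ _ hi₀j, hPaccess _ _ hji₀⟩

end FinalClass

theorem stmt14_general (n : ℕ) (hn : 1 ≤ n) (f : (Fin n → ℝ) → (Fin n → ℝ))
    (hconv : IsConvexMap f) (hmon : Monotone f) (hhom : AddHomog f)
    (v : Fin n → ℝ) :
    ∃ F, IsGraphClass (finalGraphSet (Subdiff f v)) F ∧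
      ∀ P ∈ Subdiff f v, ∀ i ∈ F, ∀ j ∉ F, P i j = 0 := by
  have hstoch : ∀ P ∈ Subdiff f v, IsStochMat P := fun P hP =>
    isStochMat_of_mem_subdiff hmon hhom hP
  obtain ⟨P₀, hP₀, hmax⟩ := (convex_subdiff f v).exists_support_maximal
    (subdiff_nonempty v hconv) fun P hP i => (hstoch P hP i).1
  obtain ⟨F, hF⟩ := exists_isFinalClass hn P₀
  have hcritical : ∀ i j, finalGraphSet (Subdiff f v) i j → P₀ i j ≠ 0 := by
    rintro i j ⟨Q, hQ, -, -, -, -, hQij⟩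
    exact hmax Q hQ i j hQij
  refine ⟨F, hF.isGraphClass hcritical (fun i j h => ⟨P₀, hP₀, h⟩)
    (hstoch P₀ hP₀).exists_ne_zero, fun Q hQ i hi j hj => ?_⟩
  by_contra hQij
  exact hmax Q hQ i j hQij (hF.apply_eq_zero hi hj)

/-- there exists a critical class of `f` that is invariant by every
matrix in the subdifferential at the eigenvector `v`. -/
theorem stmt14 (n : ℕ) (hn : 1 ≤ n) (f : (Fin n → ℝ) → (Fin n → ℝ))
    (hconv : IsConvexMap f) (hmon : Monotone f) (hhom : AddHomog f)
    (v : Fin n → ℝ) (lam : ℝ) (hv : f v = fun i => lam + v i) :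
    ∃ F, IsGraphClass (finalGraphSet (Subdiff f v)) F ∧
      ∀ P ∈ Subdiff f v, ∀ i ∈ F, ∀ j ∉ F, P i j = 0 :=
  stmt14_general n hn f hconv hmon hhom v
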